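/- arXiv:1602.00244 — 2 statements merged into one kernel-verified Lean document; each statement's English description precedes it below -/
import Mathlib

section
/- Let g, u ∈ K⟦t⟧ with u having constant term 0, and let n ≥ 1. If u ≡ Y(g) (mod t^n), then the residual e := u'/h(u) - g satisfies e ≡ 0 (mod t^{n-1}) and ∫e ≡ 0 (mod t^n). -/
open PowerSeries

/-- Composition `h(u)` of formal power series, intended for `u` with zero constant term. -/
noncomputable def pcomp {R : Type*} [CommSemiring R] (h u : R⟦X⟧) : R⟦X⟧ :=
  PowerSeries.mk fun n => ∑ i ∈ Finset.range (n + 1), coeff i h * coeff n (u ^ i)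

/-- Formal integral: the unique `F` with `F' = f` and `F(0) = 0`. -/
noncomputable def pint {K : Type*} [Field K] (f : K⟦X⟧) : K⟦X⟧ :=
  PowerSeries.mk fun n => if n = 0 then 0 else coeff (n - 1) f / (n : K)

/-!
Write `P = h(u)` and `Q = h(y)`. Since `P` has constant coefficient `1` it is a unit, and
`y' = g Q` turns the residual into `e P = (u' - y') - g (P - Q)`. Agreement of `u` and `y`
below degree `n` survives composition with `h` and loses one degree under differentiation,
so the right-hand side, hence `e`, is divisible by `X^(n-1)`; integration gains the degree back.
-/

section

variable {R : Type*} [CommSemiring R]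

lemma constantCoeff_pcomp (h u : R⟦X⟧) : constantCoeff (pcomp h u) = constantCoeff h := by
  rw [← coeff_zero_eq_constantCoeff_apply, ← coeff_zero_eq_constantCoeff_apply]
  simp [pcomp]

lemma X_pow_sub_one_dvd_derivative {f : R⟦X⟧} {n : ℕ} (hf : (X : R⟦X⟧) ^ n ∣ f) :
    (X : R⟦X⟧) ^ (n - 1) ∣ derivative R f := by
  rw [X_pow_dvd_iff] at hf ⊢
  intro m hm
  rw [coeff_derivative, hf (m + 1) (by omega), zero_mul]

end

lemma X_pow_dvd_pcomp_sub_pcomp {R : Type*} [CommRing R] (h : R⟦X⟧) {u y : R⟦X⟧} {n : ℕ}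
    (hd : (X : R⟦X⟧) ^ n ∣ u - y) : (X : R⟦X⟧) ^ n ∣ pcomp h u - pcomp h y := by
  rw [X_pow_dvd_iff]
  intro m hm
  simp only [map_sub, pcomp, coeff_mk, ← Finset.sum_sub_distrib, ← mul_sub]
  refine Finset.sum_eq_zero fun i _ => ?_
  have hpow : (X : R⟦X⟧) ^ n ∣ u ^ i - y ^ i := hd.trans (sub_dvd_pow_sub_pow u y i)
  rw [← map_sub, X_pow_dvd_iff.mp hpow m hm, mul_zero]

lemma X_pow_succ_dvd_pint {K : Type*} [Field K] {f : K⟦X⟧} {n : ℕ}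
    (hf : (X : K⟦X⟧) ^ n ∣ f) : (X : K⟦X⟧) ^ (n + 1) ∣ pint f := by
  rw [X_pow_dvd_iff] at hf ⊢
  rintro (_ | m) hm
  · simp [pint]
  · simp [pint, hf m (by omega)]

theorem stmt2_general {K : Type*} [Field K] (g h u y : K⟦X⟧)
    (hh : constantCoeff h = 1)
    (hy : derivativeFun y = g * pcomp h y)
    (n : ℕ)
    (hcong : ∀ i < n, coeff i u = coeff i y) :
    (∀ i < n - 1, coeff i (derivativeFun u * (pcomp h u)⁻¹ - g) = 0) ∧
    (∀ i < n, coeff i (pint (derivativeFun u * (pcomp h u)⁻¹ - g)) = 0) := by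
  set P := pcomp h u
  set e := derivativeFun u * P⁻¹ - g
  have hd : (X : K⟦X⟧) ^ n ∣ u - y :=
    X_pow_dvd_iff.mpr fun m hm => by rw [map_sub, hcong m hm, sub_self]
  have hP : constantCoeff P ≠ 0 := by simp [P, constantCoeff_pcomp, hh]
  have residual : e * P = derivative K (u - y) - g * (P - pcomp h y) := by
    rw [map_sub]
    change (derivativeFun u * P⁻¹ - g) * P = derivativeFun u - derivativeFun y - _
    rw [sub_mul, mul_assoc, PowerSeries.inv_mul_cancel _ hP, mul_one, hy]
    ring
  have he : (X : K⟦X⟧) ^ (n - 1) ∣ e := by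
    rw [← (isUnit_iff_constantCoeff.mpr hP.isUnit).dvd_mul_right, residual]
    exact dvd_sub (X_pow_sub_one_dvd_derivative hd)
      (((pow_dvd_pow _ (n.sub_le 1)).trans (X_pow_dvd_pcomp_sub_pcomp h hd)).mul_left g)
  have hint : (X : K⟦X⟧) ^ n ∣ pint e :=
    (pow_dvd_pow _ (by omega)).trans (X_pow_succ_dvd_pint he)
  exact ⟨X_pow_dvd_iff.mp he, X_pow_dvd_iff.mp hint⟩

/-- if `u ≡ Y(g) (mod t^n)` then the residual `e = u'/h(u) - g` satisfies
`e ≡ 0 (mod t^{n-1})` and `∫e ≡ 0 (mod t^n)`. -/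
theorem stmt2 {K : Type*} [Field K] [CharZero K] (g h u y : K⟦X⟧)
    (hh : constantCoeff h = 1) (hu : constantCoeff u = 0)
    (hy0 : constantCoeff y = 0) (hy : derivativeFun y = g * pcomp h y)
    (n : ℕ) (hn : 1 ≤ n)
    (hcong : ∀ i < n, coeff i u = coeff i y) :
    (∀ i < n - 1, coeff i (derivativeFun u * (pcomp h u)⁻¹ - g) = 0) ∧
    (∀ i < n, coeff i (pint (derivativeFun u * (pcomp h u)⁻¹ - g)) = 0) :=
  stmt2_general g h u y hh hy n hcong
end

section
/- Let g₁, g₂ ∈ K⟦t⟧ and n ≥ 1. If g₁ ≡ g₂ (mod t^n), then Y(g₁) ≡ Y(g₂) (mod t^{n+1}); that is, the first n + 1 coefficients of the solution Y(g) depend only on the first n coefficients of g. -/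
open PowerSeries

/-!
Congruences are written as divisibility by powers of `X`. Composition preserves them: if
`X ^ k ∣ u₁ - u₂` then `X ^ k ∣ u₁ ^ i - u₂ ^ i` for every `i`, hence `X ^ k ∣ h(u₁) - h(u₂)`.
So if `y₁ ≡ y₂ (mod X ^ k)` with `k ≤ n`, the right-hand sides `gⱼ · h(yⱼ)` and therefore the
derivatives `yⱼ'` agree modulo `X ^ k`; as `y₁(0) = y₂(0)`, integrating gains one order:
`y₁ ≡ y₂ (mod X ^ (k + 1))`. Starting from `k = 0`, this reaches `k = n + 1`.
-/

namespace PowerSeries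

variable {R : Type*} [CommRing R]

theorem X_pow_dvd_sub_iff {n : ℕ} {f g : R⟦X⟧} :
    X ^ n ∣ f - g ↔ ∀ i < n, coeff i f = coeff i g := by
  simp only [X_pow_dvd_iff, map_sub, sub_eq_zero]

theorem X_pow_dvd_pcomp_sub_pcomp (h : R⟦X⟧) {u₁ u₂ : R⟦X⟧} {k : ℕ} (hu : X ^ k ∣ u₁ - u₂) :
    X ^ k ∣ pcomp h u₁ - pcomp h u₂ := by
  rw [X_pow_dvd_sub_iff]
  intro m hm
  simp only [pcomp, coeff_mk]
  refine Finset.sum_congr rfl fun i _ => ?_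
  rw [X_pow_dvd_sub_iff.mp (hu.trans (sub_dvd_pow_sub_pow u₁ u₂ i)) m hm]

theorem X_pow_succ_dvd_of_dvd_derivative [IsAddTorsionFree R] {f : R⟦X⟧} {k : ℕ}
    (hf : constantCoeff f = 0) (hdf : X ^ k ∣ d⁄dX R f) : X ^ (k + 1) ∣ f := by
  rw [X_pow_dvd_iff] at hdf ⊢
  rintro (_ | j) hj
  · simpa using hf
  · have hj' : coeff (j + 1) f * (j + 1) = 0 := by
      rw [← coeff_derivative]
      exact hdf j (by omega)
    rw [mul_comm, ← Nat.cast_succ, ← nsmul_eq_mul, ← nsmul_zero (j + 1)] at hj'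
    exact nsmul_right_injective (Nat.succ_ne_zero j) hj'

theorem X_pow_succ_dvd_sub_of_derivative_eq_mul_pcomp [IsAddTorsionFree R]
    {g₁ g₂ h y₁ y₂ : R⟦X⟧} {n : ℕ}
    (hy₁0 : constantCoeff y₁ = 0) (hy₁ : d⁄dX R y₁ = g₁ * pcomp h y₁)
    (hy₂0 : constantCoeff y₂ = 0) (hy₂ : d⁄dX R y₂ = g₂ * pcomp h y₂)
    (hg : X ^ n ∣ g₁ - g₂) : X ^ (n + 1) ∣ y₁ - y₂ := by
  suffices ∀ k ≤ n + 1, X ^ k ∣ y₁ - y₂ from this _ le_rfl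
  intro k hk
  induction k with
  | zero => simp
  | succ k ih =>
    have hy : X ^ k ∣ y₁ - y₂ := ih (by omega)
    have hdy : X ^ k ∣ d⁄dX R (y₁ - y₂) := by
      rw [map_sub, hy₁, hy₂, show g₁ * pcomp h y₁ - g₂ * pcomp h y₂ =
        g₁ * (pcomp h y₁ - pcomp h y₂) + (g₁ - g₂) * pcomp h y₂ by ring]
      exact dvd_add (dvd_mul_of_dvd_right (X_pow_dvd_pcomp_sub_pcomp h hy) g₁)
        (dvd_mul_of_dvd_left ((pow_dvd_pow X (by omega)).trans hg) _)
    exact X_pow_succ_dvd_of_dvd_derivative (by simp [hy₁0, hy₂0]) hdy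

end PowerSeries

theorem stmt16_general {K : Type*} [Field K] [CharZero K] (g₁ g₂ h y₁ y₂ : K⟦X⟧)
    (hy₁0 : constantCoeff y₁ = 0) (hy₁ : derivativeFun y₁ = g₁ * pcomp h y₁)
    (hy₂0 : constantCoeff y₂ = 0) (hy₂ : derivativeFun y₂ = g₂ * pcomp h y₂)
    (n : ℕ)
    (hcong : ∀ i < n, coeff i g₁ = coeff i g₂) :
    ∀ i < n + 1, coeff i y₁ = coeff i y₂ :=
  X_pow_dvd_sub_iff.mp <|
    X_pow_succ_dvd_sub_of_derivative_eq_mul_pcomp hy₁0 hy₁ hy₂0 hy₂ (X_pow_dvd_sub_iff.mpr hcong)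

/-- if `g₁ ≡ g₂ (mod t^n)` then `Y(g₁) ≡ Y(g₂) (mod t^{n+1})`: the first
`n + 1` coefficients of the solution of `y' = g·h(y)`, `y(0) = 0` depend only on the first
`n` coefficients of `g`. -/
theorem stmt16 {K : Type*} [Field K] [CharZero K] (g₁ g₂ h y₁ y₂ : K⟦X⟧)
    (hh : constantCoeff h = 1)
    (hy₁0 : constantCoeff y₁ = 0) (hy₁ : derivativeFun y₁ = g₁ * pcomp h y₁)
    (hy₂0 : constantCoeff y₂ = 0) (hy₂ : derivativeFun y₂ = g₂ * pcomp h y₂)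
    (n : ℕ) (hn : 1 ≤ n)
    (hcong : ∀ i < n, coeff i g₁ = coeff i g₂) :
    ∀ i < n + 1, coeff i y₁ = coeff i y₂ :=
  stmt16_general g₁ g₂ h y₁ y₂ hy₁0 hy₁ hy₂0 hy₂ n hcong
end
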